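/- Let r ≥ 2 be an integer, G a graph, H a K_{1,r}-saturated subgraph of G, and let A = {v ∈ V(G) : deg_H(v) ≤ r−2}. Then every vertex of V(G)∖A has degree exactly r−1 in H, the induced subgraphs G[A] and H[A] have the same edge set, and consequently A is an (r−2)-independent set in G, so |A| ≤ α_{r−2}(G). -/

import Mathlib

/-- The star graph `K_{1,r}`: one center (vertex `0`) joined to `r` leaves. -/
def starGraph (r : ℕ) : SimpleGraph (Fin (r + 1)) where
  Adj u v := u ≠ v ∧ (u = 0 ∨ v = 0)
  symm := ⟨by intro u v h; exact ⟨h.1.symm, h.2.symm⟩⟩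
  loopless := ⟨by intro u h; exact h.1 rfl⟩

/-- `F` is contained in `G` as a subgraph, i.e. `G` has a copy of `F`. -/
def ContainsCopy {α β : Type*} (F : SimpleGraph α) (G : SimpleGraph β) : Prop :=
  ∃ f : F →g G, Function.Injective f

/-- `H` is an `F`-saturated subgraph of `G`: it is a spanning subgraph of `G` (same vertex
set, `H ≤ G`), it is `F`-free, and adding any edge of `G` missing from `H` creates a copy
of `F`. -/
def IsSatSubgraph {V α : Type*} (G : SimpleGraph V) (F : SimpleGraph α)
    (H : SimpleGraph V) : Prop :=
  H ≤ G ∧ ¬ ContainsCopy F H ∧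
    ∀ u v : V, G.Adj u v → ¬ H.Adj u v →
      ContainsCopy F (H ⊔ SimpleGraph.fromEdgeSet {s(u, v)})

/-- `sat(G, F)`: the minimum number of edges of an `F`-saturated subgraph of `G`. -/
noncomputable def satNum {V α : Type*} (G : SimpleGraph V) (F : SimpleGraph α) : ℕ :=
  sInf {m | ∃ H : SimpleGraph V, IsSatSubgraph G F H ∧ H.edgeSet.ncard = m}

/-- `S` is `k`-independent in `G`: the induced subgraph `G[S]` has maximum degree at
most `k`, i.e. every vertex of `S` has at most `k` neighbours inside `S`. -/
def IsKIndepSet {V : Type*} (G : SimpleGraph V) (k : ℕ) (S : Set V) : Prop :=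
  ∀ v ∈ S, (S ∩ G.neighborSet v).ncard ≤ k

/-- `α_k(G)`: the maximum cardinality of a `k`-independent set in `G`. -/
noncomputable def kIndepNum {V : Type*} (G : SimpleGraph V) (k : ℕ) : ℕ :=
  sSup {m | ∃ S : Set V, IsKIndepSet G k S ∧ S.ncard = m}

/-- `α(G)`: the independence number of `G`. -/
noncomputable def indepNum {V : Type*} (G : SimpleGraph V) : ℕ :=
  sSup {m | ∃ S : Set V, (∀ u ∈ S, ∀ v ∈ S, ¬ G.Adj u v) ∧ S.ncard = m}

/-- The probability, under the Erdős–Rényi random graph `𝔾(n, p)`, that the sampled graph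
lies in the set `A`; each labelled graph `G` on the vertex set `{1, …, n}` is sampled
with probability `p ^ e(G) * (1 - p) ^ (C(n,2) - e(G))`. -/
noncomputable def gnpProb (n : ℕ) (p : ℝ) (A : Set (SimpleGraph (Fin n))) : ℝ :=
  ∑ G : SimpleGraph (Fin n),
    A.indicator (fun G => p ^ G.edgeSet.ncard * (1 - p) ^ (n.choose 2 - G.edgeSet.ncard)) G

/-!
A copy of `K_{1,r}` is the same thing as a vertex of degree at least `r`. So every vertex of
the `K_{1,r}`-free graph `H` has degree at most `r - 1`, and adding a single edge `uv` raises
only the degrees of `u` and `v`, each by one. Saturation therefore forces one endpoint of every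
edge of `G` missing from `H` to have degree exactly `r - 1` in `H`; in particular `G` and `H`
agree on `A`, whose vertices have degree at most `r - 2`.
-/

section

variable {V : Type*}

lemma containsCopy_starGraph_iff [Finite V] (r : ℕ) (H : SimpleGraph V) :
    ContainsCopy (starGraph r) H ↔ ∃ v, r ≤ (H.neighborSet v).ncard := by
  constructor
  · rintro ⟨f, hf⟩
    refine ⟨f 0, ?_⟩
    let leaf (i : Fin r) : H.neighborSet (f 0) :=
      ⟨f i.succ, f.map_adj ⟨(Fin.succ_ne_zero i).symm, Or.inl rfl⟩⟩
    have hleaf : Function.Injective leaf :=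
      fun i j hij => Fin.succ_injective _ (hf (congrArg Subtype.val hij))
    simpa [Nat.card_coe_set_eq] using Nat.card_le_card_of_injective leaf hleaf
  · rintro ⟨v, hv⟩
    have := Fintype.ofFinite (H.neighborSet v)
    obtain ⟨leaf⟩ : Nonempty (Fin r ↪ H.neighborSet v) := by
      rwa [Function.Embedding.nonempty_iff_card_le, Fintype.card_fin, ← Nat.card_eq_fintype_card,
        Nat.card_coe_set_eq]
    refine ⟨⟨Fin.cons v fun i => leaf i, ?_⟩, ?_⟩
    · rintro i j ⟨hij, rfl | rfl⟩
      · cases j using Fin.cases with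
        | zero => exact absurd rfl hij
        | succ j => exact (leaf j).2
      · cases i using Fin.cases with
        | zero => exact absurd rfl hij
        | succ i => exact (leaf i).2.symm
    · refine Fin.cons_injective_of_injective ?_ (Subtype.val_injective.comp leaf.injective)
      rintro ⟨i, hi⟩
      simpa [hi] using (leaf i).2

namespace SimpleGraph

lemma neighborSet_sup_edge_subset (H : SimpleGraph V) (u v : V) :
    (H ⊔ edge u v).neighborSet u ⊆ insert v (H.neighborSet u) := by
  intro x hx
  simp only [mem_neighborSet, sup_adj, edge_adj, Set.mem_insert_iff] at hx ⊢
  grind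

lemma neighborSet_sup_edge_of_ne (H : SimpleGraph V) {u v w : V} (hu : w ≠ u) (hv : w ≠ v) :
    (H ⊔ edge u v).neighborSet w = H.neighborSet w := by
  ext x
  simp only [mem_neighborSet, sup_adj, edge_adj]
  grind

lemma ncard_neighborSet_sup_edge_le [Finite V] (H : SimpleGraph V) (u v : V) :
    ((H ⊔ edge u v).neighborSet u).ncard ≤ (H.neighborSet u).ncard + 1 :=
  (Set.ncard_le_ncard (neighborSet_sup_edge_subset H u v)).trans (Set.ncard_insert_le _ _)

end SimpleGraph

lemma le_ncard_neighborSet_add_one_of_containsCopy_sup_edge [Finite V] {r : ℕ}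
    {H : SimpleGraph V} {u v : V} (hfree : ¬ContainsCopy (starGraph r) H)
    (hcopy : ContainsCopy (starGraph r) (H ⊔ SimpleGraph.edge u v)) :
    r ≤ (H.neighborSet u).ncard + 1 ∨ r ≤ (H.neighborSet v).ncard + 1 := by
  obtain ⟨w, hw⟩ := (containsCopy_starGraph_iff r _).mp hcopy
  by_cases hwu : w = u
  · subst hwu
    exact Or.inl (hw.trans (H.ncard_neighborSet_sup_edge_le w v))
  by_cases hwv : w = v
  · subst hwv
    rw [SimpleGraph.edge_comm] at hw
    exact Or.inr (hw.trans (H.ncard_neighborSet_sup_edge_le w u))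
  rw [H.neighborSet_sup_edge_of_ne hwu hwv] at hw
  exact absurd ((containsCopy_starGraph_iff r H).mpr ⟨w, hw⟩) hfree

namespace IsSatSubgraph

variable [Finite V] {r : ℕ} {G H : SimpleGraph V}

lemma ncard_neighborSet_lt (hH : IsSatSubgraph G (starGraph r) H) (v : V) :
    (H.neighborSet v).ncard < r := by
  by_contra! h
  exact hH.2.1 ((containsCopy_starGraph_iff r H).mpr ⟨v, h⟩)

lemma adj_of_ncard_neighborSet_add_one_lt (hH : IsSatSubgraph G (starGraph r) H) {u v : V}
    (hG : G.Adj u v) (hu : (H.neighborSet u).ncard + 1 < r)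
    (hv : (H.neighborSet v).ncard + 1 < r) : H.Adj u v := by
  by_contra hnH
  have := le_ncard_neighborSet_add_one_of_containsCopy_sup_edge hH.2.1 (hH.2.2 u v hG hnH)
  omega

end IsSatSubgraph

lemma isKIndepSet_of_forall_adj_imp [Finite V] {G H : SimpleGraph V} {k : ℕ} {S : Set V}
    (hadj : ∀ u ∈ S, ∀ v ∈ S, G.Adj u v → H.Adj u v)
    (hdeg : ∀ v ∈ S, (H.neighborSet v).ncard ≤ k) : IsKIndepSet G k S := fun v hv =>
  (Set.ncard_le_ncard fun x hx => hadj v hv x hx.1 hx.2).trans (hdeg v hv)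

lemma IsKIndepSet.ncard_le_kIndepNum [Finite V] {G : SimpleGraph V} {k : ℕ} {S : Set V}
    (hS : IsKIndepSet G k S) : S.ncard ≤ kIndepNum G k :=
  le_csSup ⟨Nat.card V, by rintro _ ⟨T, -, rfl⟩; exact Set.ncard_le_card T⟩ ⟨S, hS, rfl⟩

end

/-- Let `r ≥ 2` be an integer, `G` a graph, `H` a `K_{1,r}`-saturated
subgraph of `G`, and `A = {v : deg_H(v) ≤ r-2}`. Then every vertex outside `A` has degree
exactly `r-1` in `H`, the induced subgraphs `G[A]` and `H[A]` have the same edges, and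
consequently `A` is an `(r-2)`-independent set in `G`, so `|A| ≤ α_{r-2}(G)`. -/
theorem sat_subgraph_structure {V : Type*} [Fintype V] (r : ℕ) (hr : 2 ≤ r)
    (G H : SimpleGraph V) (hH : IsSatSubgraph G (starGraph r) H)
    (A : Set V) (hA : A = {v : V | (H.neighborSet v).ncard ≤ r - 2}) :
    (∀ v ∉ A, (H.neighborSet v).ncard = r - 1) ∧
    (∀ u ∈ A, ∀ v ∈ A, (G.Adj u v ↔ H.Adj u v)) ∧
    IsKIndepSet G (r - 2) A ∧
    A.ncard ≤ kIndepNum G (r - 2) := by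
  have hmem : ∀ v, v ∈ A ↔ (H.neighborSet v).ncard ≤ r - 2 := fun v => by rw [hA]; rfl
  have hagree : ∀ u ∈ A, ∀ v ∈ A, (G.Adj u v ↔ H.Adj u v) := fun u hu v hv =>
    ⟨fun hG => hH.adj_of_ncard_neighborSet_add_one_lt hG (by have := (hmem u).mp hu; omega)
      (by have := (hmem v).mp hv; omega), fun h => hH.1 h⟩
  have hindep : IsKIndepSet G (r - 2) A :=
    isKIndepSet_of_forall_adj_imp (fun u hu v hv => (hagree u hu v hv).mp) fun v => (hmem v).mp
  refine ⟨fun v hv => ?_, hagree, hindep, hindep.ncard_le_kIndepNum⟩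
  have := hH.ncard_neighborSet_lt v
  have := mt (hmem v).mpr hv
  omega
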